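/- Let λ > 2 and let τ : ℕ → ℝ satisfy τ(1) ≥ 1 and τ(k+1) > λ·τ(k) for all k ≥ 1. Then for every finite collection of indices n_1 < n_2 < … < n_ν one has |∫_0^1 ∏_{j=1}^ν sin(2π τ(n_j) x) dx| ≤ (λ−1)/(π(λ−2)·τ(n_ν)). -/

import Mathlib

/-!
Writing `sin t = (e^{it} - e^{-it}) / 2i`, the product of the `ν` sines is `2^{-ν}` times a signed
sum of `2^ν` exponentials `e^{icx}`, with frequencies `c = 2π (±τ(n_1) ± ⋯ ± τ(n_ν))`. Each of them
integrates to at most `2 / |c|` on an interval, and `|c| ≥ 2π (τ(n_ν) - ∑_{j<ν} τ(n_j))`. By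
lacunarity the lower terms sum to at most `τ(n_ν) / (λ - 1)`, so
`|c| ≥ 2π τ(n_ν) (λ - 2) / (λ - 1)` for every choice of signs.
-/

open MeasureTheory Real

open Complex in
theorem norm_intervalIntegral_exp_mul_I_le {c : ℝ} (hc : c ≠ 0) (a b : ℝ) :
    ‖∫ x in a..b, exp (c * I * x)‖ ≤ 2 / |c| := by
  have hcI : (c : ℂ) * I ≠ 0 := mul_ne_zero (ofReal_ne_zero.2 hc) I_ne_zero
  have hnum : ‖exp (c * I * b) - exp (c * I * a)‖ ≤ 2 := by
    calc _ ≤ ‖exp (c * I * b)‖ + ‖exp (c * I * a)‖ := norm_sub_le _ _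
      _ = 2 := by
        simp only [mul_right_comm _ I, ← ofReal_mul, norm_exp_ofReal_mul_I]
        norm_num
  rw [integral_exp_mul_complex hcI, norm_div, norm_mul, norm_I, mul_one, norm_real,
    Real.norm_eq_abs]
  gcongr

section ProdSin

variable {ι : Type*} [DecidableEq ι]

open Complex in
theorem ofReal_prod_sin_mul_eq_sum_powerset (θ : ι → ℝ) (S : Finset ι) (x : ℝ) :
    ((∏ j ∈ S, Real.sin (θ j * x) : ℝ) : ℂ) =
      (I / 2) ^ S.card * ∑ T ∈ S.powerset, (-1 : ℂ) ^ (S \ T).card *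
        exp (((∑ j ∈ S \ T, θ j - ∑ j ∈ T, θ j : ℝ) : ℂ) * I * x) := by
  have hsin : ∀ j, Complex.sin (θ j * x) =
      (exp (-(θ j * x) * I) + -1 * exp (θ j * x * I)) * (I / 2) := by
    intro j
    rw [Complex.sin]
    ring
  push_cast
  simp_rw [hsin]
  rw [Finset.prod_mul_distrib, Finset.prod_const, Finset.prod_add, mul_comm]
  congr 1
  refine Finset.sum_congr rfl fun T _ => ?_
  rw [Finset.prod_mul_distrib, Finset.prod_const, ← Complex.exp_sum, ← Complex.exp_sum,
    mul_left_comm, mul_assoc, ← Complex.exp_add]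
  congr 2
  simp only [neg_mul, sub_mul, Finset.sum_neg_distrib, ← Finset.sum_mul]
  ring

theorem abs_intervalIntegral_prod_sin_le (θ : ι → ℝ) (S : Finset ι) {δ : ℝ} (hδ : 0 < δ)
    (hθ : ∀ T ⊆ S, δ ≤ |∑ j ∈ S \ T, θ j - ∑ j ∈ T, θ j|) (a b : ℝ) :
    |∫ x in a..b, ∏ j ∈ S, Real.sin (θ j * x)| ≤ 2 / δ := by
  set c : Finset ι → ℝ := fun T => ∑ j ∈ S \ T, θ j - ∑ j ∈ T, θ j
  have hterm : ∀ T ∈ S.powerset,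
      ‖∫ x in a..b, (-1 : ℂ) ^ (S \ T).card * Complex.exp (c T * Complex.I * x)‖ ≤ 2 / δ := by
    intro T hT
    have hcT := hθ T (Finset.mem_powerset.1 hT)
    have hc : c T ≠ 0 := abs_pos.1 (hδ.trans_le hcT)
    rw [intervalIntegral.integral_const_mul, norm_mul, norm_pow, norm_neg, norm_one, one_pow,
      one_mul]
    calc _ ≤ 2 / |c T| := norm_intervalIntegral_exp_mul_I_le hc a b
      _ ≤ 2 / δ := by gcongr
  rw [← Real.norm_eq_abs, ← Complex.norm_real, ← intervalIntegral.integral_ofReal]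
  simp_rw [ofReal_prod_sin_mul_eq_sum_powerset]
  rw [intervalIntegral.integral_const_mul, intervalIntegral.integral_finsetSum
    fun T _ => by apply Continuous.intervalIntegrable; fun_prop]
  calc _ ≤ (1 / 2) ^ S.card * (S.powerset.card • (2 / δ)) := by
        rw [norm_mul, norm_pow, norm_div, Complex.norm_I, Complex.norm_two]
        gcongr
        exact (norm_sum_le _ _).trans (Finset.sum_le_card_nsmul _ _ _ hterm)
    _ = 2 / δ := by
        rw [Finset.card_powerset, nsmul_eq_mul, ← mul_assoc]
        push_cast
        rw [← mul_pow]
        norm_num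

end ProdSin

theorem Finset.sub_sum_erase_le_abs_sum_sdiff_sub_sum {ι : Type*} [DecidableEq ι]
    {f : ι → ℝ} {S T : Finset ι} {m : ι} (hf : ∀ j ∈ S, 0 ≤ f j) (hm : m ∈ S) (hT : T ⊆ S) :
    f m - ∑ j ∈ S.erase m, f j ≤ |∑ j ∈ S \ T, f j - ∑ j ∈ T, f j| := by
  wlog hmT : m ∈ T generalizing T
  · have h := this (T := S \ T) Finset.sdiff_subset (Finset.mem_sdiff.2 ⟨hm, hmT⟩)
    rwa [Finset.sdiff_sdiff_eq_self hT, abs_sub_comm] at h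
  have hsplit : ∑ j ∈ S.erase m, f j = ∑ j ∈ S \ T, f j + ∑ j ∈ T.erase m, f j := by
    have hdiff : S.erase m \ T.erase m = S \ T := by grind
    rw [← Finset.sum_sdiff (Finset.erase_subset_erase m hT), hdiff]
  have hT' : ∑ j ∈ T, f j = f m + ∑ j ∈ T.erase m, f j := (Finset.add_sum_erase T f hmT).symm
  have hnonneg : 0 ≤ ∑ j ∈ T.erase m, f j :=
    Finset.sum_nonneg fun j hj => hf j (hT (Finset.mem_of_mem_erase hj))
  rw [abs_sub_comm]
  exact le_abs.2 (Or.inl (by linarith))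

section Lacunary

variable {lam : ℝ} {τ : ℕ → ℝ}

theorem pos_of_lacunary (hlam : 0 < lam) (hτ1 : 0 < τ 1)
    (hτ : ∀ k, 1 ≤ k → lam * τ k ≤ τ (k + 1)) {k : ℕ} (hk : 1 ≤ k) : 0 < τ k := by
  induction k, hk using Nat.le_induction with
  | base => exact hτ1
  | succ k hk ih => exact (mul_pos hlam ih).trans_le (hτ k hk)

theorem sum_Ico_le_div_of_lacunary (hlam : 1 < lam) (hτ1 : 0 ≤ τ 1)
    (hτ : ∀ k, 1 ≤ k → lam * τ k ≤ τ (k + 1)) {k : ℕ} (hk : 1 ≤ k) :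
    ∑ j ∈ Finset.Ico 1 k, τ j ≤ τ k / (lam - 1) := by
  have hlam1 : 0 < lam - 1 := sub_pos.2 hlam
  induction k, hk using Nat.le_induction with
  | base => simpa using div_nonneg hτ1 hlam1.le
  | succ k hk ih =>
    rw [Finset.sum_Ico_succ_top hk, le_div_iff₀ hlam1]
    rw [le_div_iff₀ hlam1] at ih
    linarith [hτ k hk]

theorem sum_erase_le_div_of_lacunary (hlam : 1 < lam) (hτ1 : 0 < τ 1)
    (hτ : ∀ k, 1 ≤ k → lam * τ k ≤ τ (k + 1)) {S : Finset ℕ} {m : ℕ} (hm : 1 ≤ m)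
    (hS : S ⊆ Finset.Icc 1 m) :
    ∑ j ∈ S.erase m, τ j ≤ τ m / (lam - 1) := by
  have hsub : S.erase m ⊆ Finset.Ico 1 m := fun j hj => by
    have := hS (Finset.mem_of_mem_erase hj)
    grind
  calc ∑ j ∈ S.erase m, τ j ≤ ∑ j ∈ Finset.Ico 1 m, τ j :=
        Finset.sum_le_sum_of_subset_of_nonneg hsub fun j hj _ =>
          (pos_of_lacunary (by linarith) hτ1 hτ (Finset.mem_Ico.1 hj).1).le
    _ ≤ τ m / (lam - 1) := sum_Ico_le_div_of_lacunary hlam hτ1.le hτ hm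

end Lacunary

theorem stmt_13 (lam : ℝ) (hlam : 2 < lam)
    (τ : ℕ → ℝ) (hτ1 : 1 ≤ τ 1) (hτ : ∀ k, 1 ≤ k → lam * τ k < τ (k + 1))
    (S : Finset ℕ) (hS : S.Nonempty) (hS1 : ∀ j ∈ S, 1 ≤ j) :
    |∫ x in Set.Ico (0 : ℝ) 1, ∏ j ∈ S, Real.sin (2 * π * τ j * x)| ≤
      (lam - 1) / (π * (lam - 2) * τ (S.max' hS)) := by
  set m := S.max' hS
  have hτ' : ∀ k, 1 ≤ k → lam * τ k ≤ τ (k + 1) := fun k hk => (hτ k hk).le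
  have hpos : ∀ j, 1 ≤ j → 0 < τ j := fun j hj =>
    pos_of_lacunary (by linarith) (by linarith) hτ' hj
  have hmS : m ∈ S := S.max'_mem hS
  have htail : ∑ j ∈ S.erase m, τ j ≤ τ m / (lam - 1) :=
    sum_erase_le_div_of_lacunary (by linarith) (by linarith) hτ' (hS1 m hmS)
      fun j hj => Finset.mem_Icc.2 ⟨hS1 j hj, S.le_max' j hj⟩
  have hfreq : ∀ T ⊆ S, 2 * π * (τ m - τ m / (lam - 1)) ≤
      |∑ j ∈ S \ T, 2 * π * τ j - ∑ j ∈ T, 2 * π * τ j| := by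
    intro T hT
    rw [← Finset.mul_sum, ← Finset.mul_sum, ← mul_sub, abs_mul, abs_of_pos (by positivity)]
    gcongr
    exact (sub_le_sub_left htail _).trans
      (Finset.sub_sum_erase_le_abs_sum_sdiff_sub_sum (fun j hj => (hpos j (hS1 j hj)).le) hmS hT)
  have hδ : 0 < 2 * π * (τ m - τ m / (lam - 1)) := by
    have : τ m / (lam - 1) < τ m := div_lt_self (hpos m (hS1 m hmS)) (by linarith)
    have := pi_pos
    positivity
  rw [integral_Ico_eq_integral_Ioo, ← integral_Ioc_eq_integral_Ioo,
    ← intervalIntegral.integral_of_le zero_le_one]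
  refine (abs_intervalIntegral_prod_sin_le _ S hδ hfreq 0 1).trans_eq ?_
  have : lam - 1 ≠ 0 := by linarith
  have := (hpos m (hS1 m hmS)).ne'
  have := pi_ne_zero
  field_simp
  ring
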